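/- arXiv:1108.1444 — 2 statements merged into one kernel-verified Lean document; each statement's English description precedes it below -/
import Mathlib

section
/- Consider the holomorphic curve C = {(t, eᵗ) : t ∈ ℂ*} ⊆ (ℂ*)². Its amoeba Log(C) = {(log|t|, Re t) : t ∈ ℂ*} equals the set {(x, y) ∈ ℝ² : -eˣ ≤ y ≤ eˣ} minus possibly a measure-zero set; in particular, Log(C) has infinite Lebesgue area in ℝ². -/
/-! `Log (t, eᵗ) = (log ‖t‖, Re t)`, and a nonzero `t` with prescribed modulus `eˣ` and real part
`y` exists exactly when `|y| ≤ eˣ`. So the amoeba is the whole region between `-eˣ` and `eˣ`, which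
contains the half-strip `[0, ∞) × [-1, 1]` of infinite area. -/

open Complex MeasureTheory

theorem Complex.exists_re_eq_norm_eq {x r : ℝ} (h : |x| ≤ r) : ∃ z : ℂ, z.re = x ∧ ‖z‖ = r := by
  have hr : 0 ≤ r := (abs_nonneg x).trans h
  have hx : x ^ 2 ≤ r ^ 2 := sq_le_sq' (abs_le.mp h).1 (abs_le.mp h).2
  refine ⟨⟨x, √(r ^ 2 - x ^ 2)⟩, rfl, ?_⟩
  rw [Complex.norm_def, Complex.normSq_mk, ← sq, ← sq, Real.sq_sqrt (by linarith),
    add_sub_cancel, Real.sqrt_sq hr]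

theorem setOf_log_norm_re_eq :
    {p : ℝ × ℝ | ∃ t : ℂ, t ≠ 0 ∧ p = (Real.log ‖t‖, t.re)} =
      {p | -Real.exp p.1 ≤ p.2 ∧ p.2 ≤ Real.exp p.1} := by
  ext ⟨x, y⟩
  simp only [Set.mem_ofPred_eq, Prod.mk.injEq, ← abs_le]
  constructor
  · rintro ⟨t, ht, rfl, rfl⟩
    rw [Real.exp_log (norm_pos_iff.mpr ht)]
    exact abs_re_le_norm t
  · intro h
    obtain ⟨t, rfl, ht⟩ := Complex.exists_re_eq_norm_eq h
    have ht0 : t ≠ 0 := norm_pos_iff.mp (ht ▸ Real.exp_pos x)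
    exact ⟨t, ht0, by rw [ht, Real.log_exp], rfl⟩

theorem volume_setOf_neg_le_and_le_eq_top {f : ℝ → ℝ} (hf : ∀ x, 0 ≤ x → 1 ≤ f x) :
    volume {p : ℝ × ℝ | -f p.1 ≤ p.2 ∧ p.2 ≤ f p.1} = ⊤ := by
  have hsub : Set.Ici (0 : ℝ) ×ˢ Set.Icc (-1 : ℝ) 1 ⊆ {p | -f p.1 ≤ p.2 ∧ p.2 ≤ f p.1} := by
    rintro ⟨x, y⟩ ⟨hx, hy, hy'⟩
    have := hf x hx
    exact ⟨by linarith, by linarith⟩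
  refine top_le_iff.mp (le_of_eq_of_le ?_ (measure_mono hsub))
  rw [Measure.volume_eq_prod, Measure.prod_prod, Real.volume_Ici, Real.volume_Icc]
  norm_num

theorem stmt6 :
    let S : Set (ℝ × ℝ) :=
      {p | ∃ t : ℂ, t ≠ 0 ∧ p = (Real.log ‖t‖, t.re)}
    let R : Set (ℝ × ℝ) := {p | -Real.exp p.1 ≤ p.2 ∧ p.2 ≤ Real.exp p.1}
    S ⊆ R ∧ volume (R \ S) = 0 ∧ volume S = ⊤ := by
  intro S R
  have hSeqR : S = R := setOf_log_norm_re_eq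
  rw [hSeqR, Set.sdiff_self]
  exact ⟨subset_rfl, measure_empty,
    volume_setOf_neg_le_and_le_eq_top fun x hx => Real.one_le_exp hx⟩
end

section
/- Let ρ : ℂ* → (ℂ*)^{2+m} be ρ(t) = (t, 1+t, b₂ + a₂t, …, b_{1+m} + a_{1+m}t) with all aⱼ, bⱼ ∈ ℂ* and with bⱼ + aⱼt ≠ 0 on the domain. If for some non-real t ∈ ℂ* one has |ρ(t)ⱼ| = |ρ(t̄)ⱼ| for every coordinate j, then aⱼ/bⱼ ∈ ℝ* for every j = 2, …, 1+m; i.e., the line is real up to coordinatewise scaling. -/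
/-!
Since `|b + a t|² - |b + a t̄|² = -4 Im(b̄ a) Im t`, equality at a non-real `t` makes `b̄ a` real,
and then so is `a / b = b̄ a / |b|²`.
-/

open Complex ComplexConjugate

namespace Complex

theorem normSq_add_mul_sub_normSq_add_mul_conj (a b t : ℂ) :
    normSq (b + a * t) - normSq (b + a * conj t) = -4 * (conj b * a).im * t.im := by
  simp only [normSq_apply, add_re, add_im, mul_re, mul_im, conj_re, conj_im]
  ring

theorem im_conj_mul_eq_zero_of_norm_add_mul_eq {a b t : ℂ} (ht : t.im ≠ 0)
    (h : ‖b + a * t‖ = ‖b + a * conj t‖) : (conj b * a).im = 0 := by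
  have hsq : normSq (b + a * t) = normSq (b + a * conj t) := by
    rw [normSq_eq_norm_sq, normSq_eq_norm_sq, h]
  have := normSq_add_mul_sub_normSq_add_mul_conj a b t
  rw [hsq, sub_self] at this
  simpa [ht] using this

theorem div_im_eq_im_conj_mul_div_normSq (a b : ℂ) : (a / b).im = (conj b * a).im / normSq b := by
  simp only [div_im, mul_im, conj_re, conj_im]
  ring

theorem exists_real_div_eq_of_norm_add_mul_eq {a b t : ℂ} (ha : a ≠ 0) (hb : b ≠ 0)
    (ht : t.im ≠ 0) (h : ‖b + a * t‖ = ‖b + a * conj t‖) :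
    ∃ r : ℝ, r ≠ 0 ∧ a / b = r := by
  have him : (a / b).im = 0 := by
    rw [div_im_eq_im_conj_mul_div_normSq, im_conj_mul_eq_zero_of_norm_add_mul_eq ht h, zero_div]
  obtain ⟨r, hr⟩ := conj_eq_iff_real.mp (conj_eq_iff_im.mpr him)
  refine ⟨r, ?_, hr⟩
  rintro rfl
  exact div_ne_zero ha hb (by simpa using hr)

end Complex

theorem stmt12_general (m : ℕ) (a b : Fin m → ℂ)
    (ha : ∀ j, a j ≠ 0) (hb : ∀ j, b j ≠ 0)
    (t : ℂ) (ht : t.im ≠ 0)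
    (h : ∀ j, ‖b j + a j * t‖ = ‖b j + a j * (starRingEnd ℂ) t‖) :
    ∀ j, ∃ r : ℝ, r ≠ 0 ∧ a j / b j = (r : ℂ) :=
  fun j => exists_real_div_eq_of_norm_add_mul_eq (ha j) (hb j) ht (h j)

theorem stmt12 (m : ℕ) (a b : Fin m → ℂ)
    (ha : ∀ j, a j ≠ 0) (hb : ∀ j, b j ≠ 0)
    (t : ℂ) (ht0 : t ≠ 0) (ht : t.im ≠ 0)
    (hdom : ∀ j, b j + a j * t ≠ 0)
    (h : ∀ j, ‖b j + a j * t‖ = ‖b j + a j * (starRingEnd ℂ) t‖) :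
    ∀ j, ∃ r : ℝ, r ≠ 0 ∧ a j / b j = (r : ℂ) :=
  stmt12_general m a b ha hb t ht h
end
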